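/- arXiv:2006.06991 — 4 statements merged into one kernel-verified Lean document; each statement's English description precedes it below -/
import Mathlib

section
/- Let ι be a nonempty finite index set, f_c > 0, τ₀ ∈ ℝ, τ : ι → ℝ, A₀ > 0 and A : ι → ℝ with A i > 0. If there exists some i ∈ ι with f_c·(τ i − τ₀) ∉ ℤ, then the zero phase-shift configuration (which minimizes the delay spread) is strictly suboptimal for received power: ‖A₀·exp(−2π·I·f_c·τ₀) + ∑_{i∈ι} A i · exp(−2π·I·f_c·τ i)‖ < A₀ + ∑_{i∈ι} A i. In particular, jointly maximizing the received power and minimizing the delay spread is then impossible. -/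
/-!
By strict convexity of the complex norm, `‖x + y‖ = ‖x‖ + ‖y‖` forces `x` and `y` onto a common
ray. Two phasors of positive amplitude lie on a common ray only when their phases agree modulo
`2π`, i.e. when `f_c (τ j - τ₀)` is an integer. So a single misaligned path already makes the
triangle inequality for the received phasor sum strict.
-/

open Real Finset

theorem norm_add_sum_lt_of_not_sameRay {E ι : Type*} [NormedAddCommGroup E] [NormedSpace ℝ E]
    [StrictConvexSpace ℝ E] {s : Finset ι} {z : ι → E} {x : E} {j : ι} (hj : j ∈ s)
    (h : ¬ SameRay ℝ x (z j)) : ‖x + ∑ i ∈ s, z i‖ < ‖x‖ + ∑ i ∈ s, ‖z i‖ := by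
  classical
  rw [← add_sum_erase s z hj, ← add_sum_erase s (‖z ·‖) hj, ← add_assoc, ← add_assoc]
  calc ‖x + z j + ∑ i ∈ s.erase j, z i‖ ≤ ‖x + z j‖ + ‖∑ i ∈ s.erase j, z i‖ := norm_add_le _ _
    _ < ‖x‖ + ‖z j‖ + ∑ i ∈ s.erase j, ‖z i‖ :=
      add_lt_add_of_lt_of_le (norm_add_lt_of_not_sameRay h) (norm_sum_le _ _)

theorem SameRay.eq_of_pos_smul_of_norm_eq {E : Type*} [NormedAddCommGroup E] [NormedSpace ℝ E]
    {u v : E} {a b : ℝ} (ha : 0 < a) (hb : 0 < b) (h : SameRay ℝ (a • u) (b • v))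
    (huv : ‖u‖ = ‖v‖) : u = v := by
  have hsame : SameRay ℝ u v := by
    simpa only [smul_smul, inv_mul_cancel₀ ha.ne', inv_mul_cancel₀ hb.ne', one_smul] using
      (h.pos_smul_left (inv_pos.2 ha)).pos_smul_right (inv_pos.2 hb)
  exact hsame.eq_of_norm_eq huv

namespace Complex

theorem exists_int_of_sameRay_ofReal_mul_exp_mul_I {a b θ φ : ℝ} (ha : 0 < a) (hb : 0 < b)
    (h : SameRay ℝ ((a : ℂ) * exp (θ * I)) ((b : ℂ) * exp (φ * I))) :
    ∃ k : ℤ, θ = φ + k * (2 * π) := by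
  rw [← real_smul (x := a), ← real_smul (x := b)] at h
  have hexp := h.eq_of_pos_smul_of_norm_eq ha hb (by simp only [norm_exp_ofReal_mul_I])
  obtain ⟨k, hk⟩ := exp_eq_exp_iff_exists_int.1 hexp
  refine ⟨k, ofReal_injective (mul_right_cancel₀ I_ne_zero ?_)⟩
  push_cast
  linear_combination hk

theorem norm_ofReal_mul_exp_neg_ofReal_mul_I {a : ℝ} (ha : 0 ≤ a) (θ : ℝ) :
    ‖(a : ℂ) * exp (-(θ : ℂ) * I)‖ = a := by
  rw [← ofReal_neg, norm_mul, norm_exp_ofReal_mul_I, norm_real, Real.norm_of_nonneg ha, mul_one]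

end Complex

theorem zero_phase_strictly_suboptimal_general
    {ι : Type*} [Fintype ι]
    (f_c : ℝ) (τ₀ : ℝ) (τ : ι → ℝ)
    (A₀ : ℝ) (hA₀ : 0 < A₀) (A : ι → ℝ) (hA : ∀ i, 0 < A i)
    (hnint : ∃ i, ¬ ∃ k : ℤ, f_c * (τ i - τ₀) = (k : ℝ)) :
    ‖(A₀ : ℂ) * Complex.exp (-(2 * π * f_c * τ₀ : ℝ) * Complex.I)
        + ∑ i, (A i : ℂ) * Complex.exp (-(2 * π * f_c * τ i : ℝ) * Complex.I)‖
      < A₀ + ∑ i, A i := by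
  obtain ⟨j, hj⟩ := hnint
  have hray : ¬ SameRay ℝ ((A₀ : ℂ) * Complex.exp (-(2 * π * f_c * τ₀ : ℝ) * Complex.I))
      ((A j : ℂ) * Complex.exp (-(2 * π * f_c * τ j : ℝ) * Complex.I)) := by
    intro h
    simp only [← Complex.ofReal_neg] at h
    obtain ⟨k, hk⟩ := Complex.exists_int_of_sameRay_ofReal_mul_exp_mul_I hA₀ (hA j) h
    exact hj ⟨k, mul_left_cancel₀ two_pi_pos.ne' (by linear_combination hk)⟩
  calc _ < _ := norm_add_sum_lt_of_not_sameRay (mem_univ j) hray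
    _ = A₀ + ∑ i, A i := by
      simp only [Complex.norm_ofReal_mul_exp_neg_ofReal_mul_I hA₀.le,
        Complex.norm_ofReal_mul_exp_neg_ofReal_mul_I (hA _).le]

/-- if for some element `f_c (τ i − τ₀)` is not an integer, then
the zero phase-shift configuration is strictly suboptimal in received power. -/
theorem zero_phase_strictly_suboptimal
    {ι : Type*} [Fintype ι] [Nonempty ι]
    (f_c : ℝ) (hf : 0 < f_c) (τ₀ : ℝ) (τ : ι → ℝ)
    (A₀ : ℝ) (hA₀ : 0 < A₀) (A : ι → ℝ) (hA : ∀ i, 0 < A i)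
    (hnint : ∃ i, ¬ ∃ k : ℤ, f_c * (τ i - τ₀) = (k : ℝ)) :
    ‖(A₀ : ℂ) * Complex.exp (-(2 * π * f_c * τ₀ : ℝ) * Complex.I)
        + ∑ i, (A i : ℂ) * Complex.exp (-(2 * π * f_c * τ i : ℝ) * Complex.I)‖
      < A₀ + ∑ i, A i :=
  zero_phase_strictly_suboptimal_general f_c τ₀ τ A₀ hA₀ A hA hnint
end

section
/- Let ι be a nonempty finite index set, f_c > 0, τ₀ ∈ ℝ, τ : ι → ℝ, A₀ ≥ 0 and A : ι → ℝ with A i ≥ 0. With the phase shifts φ i = 2π·Int.fract(f_c·(τ₀ − τ i)), the received phasor sum attains the maximal modulus: ‖A₀·exp(−2π·I·f_c·τ₀) + ∑_{i∈ι} A i · exp(−2π·I·f_c·τ i − I·φ i)‖ = A₀ + ∑_{i∈ι} A i; equivalently, exp(−2π·I·f_c·τ i − I·φ i) = exp(−2π·I·f_c·τ₀) for every i ∈ ι. -/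
/-!
Subtracting the phase `2π · fract(f_c (τ₀ − τ i))` differs from subtracting `2π f_c (τ₀ − τ i)` by
an integer multiple of `2π`, so every reflected phasor is rotated exactly onto the direct one.
With all phasors equal to one unit vector `z`, the sum is `(A₀ + ∑ i, A i) · z`, whose modulus is
`A₀ + ∑ i, A i` because the amplitudes are nonnegative.
-/

open Real Finset

namespace Complex

theorem exp_two_pi_fract_mul_I (t : ℝ) :
    exp ((2 * π * Int.fract t : ℝ) * I) = exp ((2 * π * t : ℝ) * I) := by
  have h : ((2 * π * t : ℝ) : ℂ) * I
      = (2 * π * Int.fract t : ℝ) * I + ⌊t⌋ * (2 * π * I) := by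
    rw [Int.fract]
    push_cast
    ring
  rw [h, exp_add, exp_int_mul_two_pi_mul_I, mul_one]

theorem exp_neg_mul_I_sub_two_pi_fract_mul_I (θ t : ℝ) :
    exp (-(θ : ℂ) * I - (2 * π * Int.fract t : ℝ) * I)
      = exp (-(θ + 2 * π * t : ℝ) * I) := by
  rw [exp_sub, exp_two_pi_fract_mul_I, ← exp_sub]
  congr 1
  push_cast
  ring

theorem norm_ofReal_mul_add_sum_ofReal_mul {ι : Type*} [Fintype ι] {z : ℂ} (hz : ‖z‖ = 1)
    {a : ℝ} (ha : 0 ≤ a) {b : ι → ℝ} (hb : ∀ i, 0 ≤ b i) :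
    ‖(a : ℂ) * z + ∑ i, (b i : ℂ) * z‖ = a + ∑ i, b i := by
  have hsum : 0 ≤ a + ∑ i, b i := add_nonneg ha (sum_nonneg fun i _ => hb i)
  rw [← sum_mul, ← add_mul, norm_mul, hz, mul_one, ← ofReal_sum, ← ofReal_add, norm_real,
    norm_of_nonneg hsum]

end Complex

theorem pareto_phase_shifts_maximize_power_general
    {ι : Type*} [Fintype ι]
    (f_c : ℝ) (τ₀ : ℝ) (τ : ι → ℝ)
    (A₀ : ℝ) (hA₀ : 0 ≤ A₀) (A : ι → ℝ) (hA : ∀ i, 0 ≤ A i) :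
    ‖(A₀ : ℂ) * Complex.exp (-(2 * π * f_c * τ₀ : ℝ) * Complex.I)
        + ∑ i, (A i : ℂ) * Complex.exp (-(2 * π * f_c * τ i : ℝ) * Complex.I
            - (2 * π * Int.fract (f_c * (τ₀ - τ i)) : ℝ) * Complex.I)‖
      = A₀ + ∑ i, A i
    ∧ ∀ i, Complex.exp (-(2 * π * f_c * τ i : ℝ) * Complex.I
            - (2 * π * Int.fract (f_c * (τ₀ - τ i)) : ℝ) * Complex.I)
          = Complex.exp (-(2 * π * f_c * τ₀ : ℝ) * Complex.I) := by
  have aligned : ∀ i, Complex.exp (-(2 * π * f_c * τ i : ℝ) * Complex.I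
      - (2 * π * Int.fract (f_c * (τ₀ - τ i)) : ℝ) * Complex.I)
        = Complex.exp (-(2 * π * f_c * τ₀ : ℝ) * Complex.I) := by
    intro i
    rw [Complex.exp_neg_mul_I_sub_two_pi_fract_mul_I]
    congr 4
    ring
  refine ⟨?_, aligned⟩
  simp only [aligned]
  exact Complex.norm_ofReal_mul_add_sum_ofReal_mul
    (by rw [← Complex.ofReal_neg, Complex.norm_exp_ofReal_mul_I]) hA₀ hA

/-- the Pareto optimal phase shifts
`φ i = 2π · fract(f_c (τ₀ − τ i))` align all phasors with the direct path and
attain the maximal modulus `A₀ + ∑ i, A i`. -/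
theorem pareto_phase_shifts_maximize_power
    {ι : Type*} [Fintype ι] [Nonempty ι]
    (f_c : ℝ) (hf : 0 < f_c) (τ₀ : ℝ) (τ : ι → ℝ)
    (A₀ : ℝ) (hA₀ : 0 ≤ A₀) (A : ι → ℝ) (hA : ∀ i, 0 ≤ A i) :
    ‖(A₀ : ℂ) * Complex.exp (-(2 * π * f_c * τ₀ : ℝ) * Complex.I)
        + ∑ i, (A i : ℂ) * Complex.exp (-(2 * π * f_c * τ i : ℝ) * Complex.I
            - (2 * π * Int.fract (f_c * (τ₀ - τ i)) : ℝ) * Complex.I)‖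
      = A₀ + ∑ i, A i
    ∧ ∀ i, Complex.exp (-(2 * π * f_c * τ i : ℝ) * Complex.I
            - (2 * π * Int.fract (f_c * (τ₀ - τ i)) : ℝ) * Complex.I)
          = Complex.exp (-(2 * π * f_c * τ₀ : ℝ) * Complex.I) :=
  pareto_phase_shifts_maximize_power_general f_c τ₀ τ A₀ hA₀ A hA
end

section
/- Let ι be a nonempty finite index set, f_c > 0, τ₀ ∈ ℝ, and τ : ι → ℝ with τ i ≥ τ₀ for all i. With the phase shifts φ i = 2π·Int.fract(f_c·(τ₀ − τ i)), the effective delay of each IRS path satisfies τ i + φ i/(2π·f_c) − τ₀ = ⌈f_c·(τ i − τ₀)⌉ / f_c ≥ 0, and consequently the delay spread equals T_d = (1/f_c)·max_{i∈ι} ⌈f_c·(τ i − τ₀)⌉. -/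
/- Writing `x = f_c (τ i − τ₀)`, the phase shift delays path `i` by `fract (−x) / f_c`, and
`x + fract (−x) = ⌈x⌉`: each path is pushed back to the next multiple of the carrier period
`1 / f_c` after the direct path. The delay spread is then the largest of these excess delays, and
scaling by `1 / f_c > 0` commutes with the maximum. -/

open Real Finset

theorem Int.self_add_fract_neg {R : Type*} [Ring R] [LinearOrder R] [IsStrictOrderedRing R]
    [FloorRing R] (x : R) : x + Int.fract (-x) = ⌈x⌉ := by
  rw [Int.fract, Int.floor_neg, Int.cast_neg]
  abel

theorem effective_delay_sub_eq_ceil_div {f_c : ℝ} (hf : f_c ≠ 0) (τ₀ t : ℝ) :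
    t + 2 * π * Int.fract (f_c * (τ₀ - t)) / (2 * π * f_c) - τ₀
      = (⌈f_c * (t - τ₀)⌉ : ℝ) / f_c := by
  rw [← Int.self_add_fract_neg, show f_c * (τ₀ - t) = -(f_c * (t - τ₀)) by ring]
  field_simp
  ring

/-- with the Pareto optimal phase shifts
`φ i = 2π · fract(f_c (τ₀ − τ i))`, each effective excess delay equals
`⌈f_c (τ i − τ₀)⌉ / f_c ≥ 0`, and the delay spread equals
`(1/f_c) · max_i ⌈f_c (τ i − τ₀)⌉`. -/
theorem pareto_phase_shifts_delay_spread
    {ι : Type*} [Fintype ι] [Nonempty ι]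
    (f_c : ℝ) (hf : 0 < f_c) (τ₀ : ℝ) (τ : ι → ℝ) (hττ₀ : ∀ i, τ₀ ≤ τ i) :
    (∀ i, τ i + 2 * π * Int.fract (f_c * (τ₀ - τ i)) / (2 * π * f_c) - τ₀
        = (⌈f_c * (τ i - τ₀)⌉ : ℝ) / f_c
      ∧ (0 : ℝ) ≤ (⌈f_c * (τ i - τ₀)⌉ : ℝ) / f_c)
    ∧ Finset.univ.sup' Finset.univ_nonempty
        (fun i => τ i + 2 * π * Int.fract (f_c * (τ₀ - τ i)) / (2 * π * f_c)) - τ₀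
      = (1 / f_c) * Finset.univ.sup' Finset.univ_nonempty
          (fun i => (⌈f_c * (τ i - τ₀)⌉ : ℝ)) := by
  have excess_delay (i : ι) := effective_delay_sub_eq_ceil_div hf.ne' τ₀ (τ i)
  have ceil_nonneg (i : ι) : (0 : ℝ) ≤ ⌈f_c * (τ i - τ₀)⌉ :=
    Int.cast_nonneg_iff.mpr (Int.ceil_nonneg (mul_nonneg hf.le (sub_nonneg.mpr (hττ₀ i))))
  refine ⟨fun i => ⟨excess_delay i, div_nonneg (ceil_nonneg i) hf.le⟩, ?_⟩
  rw [one_div_mul_eq_div, Finset.sup'_div₀ hf.le]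
  exact (map_finset_sup' (OrderIso.subRight τ₀) _ _).trans
    (Finset.sup'_congr _ rfl fun i _ => excess_delay i)
end

section
/- Let ι be a nonempty finite index set, f_c > 0, and let τ₀ : ℝ → ℝ and τ i : ℝ → ℝ (i ∈ ι) be functions differentiable at a time t. Define φ i (s) = 2π·Int.fract(f_c·(τ₀(s) − τ i (s))). If f_c·(τ₀(t) − τ i (t)) ∉ ℤ, then the effective delay s ↦ τ i (s) + φ i (s)/(2π·f_c) is differentiable at t with derivative (τ₀)'(t); hence at such times the Doppler spread between the direct path and every IRS path, as well as across the IRS, is zero. -/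
open Real Filter Topology

section FloorRing

variable {α : Type*} [Ring α] [LinearOrder α] [FloorRing α] [TopologicalSpace α]
  [OrderClosedTopology α]

theorem Int.floor_eventuallyEq {x : α} (hx : x ≠ ⌊x⌋) :
    ∀ᶠ y in 𝓝 x, ⌊y⌋ = ⌊x⌋ := by
  have hx_mem : x ∈ Set.Ioo (⌊x⌋ : α) (⌊x⌋ + 1) :=
    ⟨(Int.floor_le x).lt_of_ne' hx, Int.lt_floor_add_one x⟩
  filter_upwards [isOpen_Ioo.mem_nhds hx_mem] with y hy
  exact Int.floor_eq_iff.mpr ⟨hy.1.le, hy.2⟩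

theorem Int.fract_eventuallyEq {x : α} (hx : x ≠ ⌊x⌋) :
    Int.fract =ᶠ[𝓝 x] fun y => y - ⌊x⌋ := by
  filter_upwards [Int.floor_eventuallyEq hx] with y hy
  rw [Int.fract, hy]

end FloorRing

theorem HasDerivAt.fract {g : ℝ → ℝ} {g' t : ℝ} (hg : HasDerivAt g g' t) (ht : g t ≠ ⌊g t⌋) :
    HasDerivAt (fun s => Int.fract (g s)) g' t :=
  (hg.sub_const _).congr_of_eventuallyEq ((Int.fract_eventuallyEq ht).comp_tendsto hg.continuousAt)

/-- Near `t` the phase shift `2π · fract (f_c (τ₀ - τᵢ))` differs from `2π f_c (τ₀ - τᵢ)` by a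
constant, so its delay contribution cancels the drift of `τᵢ` against `τ₀`. -/
theorem hasDerivAt_effectiveDelay {f_c a b t : ℝ} {τ₀ τi : ℝ → ℝ} (hf : f_c ≠ 0)
    (hτ₀ : HasDerivAt τ₀ a t) (hτi : HasDerivAt τi b t)
    (hnint : ¬ ∃ k : ℤ, f_c * (τ₀ t - τi t) = k) :
    HasDerivAt
      (fun s => τi s + 2 * π * Int.fract (f_c * (τ₀ s - τi s)) / (2 * π * f_c)) a t := by
  have hphase : HasDerivAt (fun s => Int.fract (f_c * (τ₀ s - τi s))) (f_c * (a - b)) t :=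
    ((hτ₀.sub hτi).const_mul f_c).fract fun h => hnint ⟨_, h⟩
  refine (hτi.add ((hphase.const_mul (2 * π)).div_const (2 * π * f_c))).congr_deriv ?_
  field_simp
  ring

theorem pareto_phase_shifts_zero_doppler_general
    {ι : Type*}
    (f_c : ℝ) (hf : 0 < f_c)
    (τ₀ : ℝ → ℝ) (τ : ι → ℝ → ℝ) (t : ℝ)
    (hτ₀ : DifferentiableAt ℝ τ₀ t) (hτ : ∀ i, DifferentiableAt ℝ (τ i) t)
    (hnint : ∀ i, ¬ ∃ k : ℤ, f_c * (τ₀ t - τ i t) = (k : ℝ)) :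
    (∀ i,
      DifferentiableAt ℝ
        (fun s => τ i s + 2 * π * Int.fract (f_c * (τ₀ s - τ i s)) / (2 * π * f_c)) t
      ∧ deriv
          (fun s => τ i s + 2 * π * Int.fract (f_c * (τ₀ s - τ i s)) / (2 * π * f_c)) t
        = deriv τ₀ t)
    ∧ ∀ i j,
        f_c * |deriv
            (fun s => τ i s + 2 * π * Int.fract (f_c * (τ₀ s - τ i s)) / (2 * π * f_c)) t
          - deriv τ₀ t| = 0
        ∧ f_c * |deriv
            (fun s => τ i s + 2 * π * Int.fract (f_c * (τ₀ s - τ i s)) / (2 * π * f_c)) t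
          - deriv
            (fun s => τ j s + 2 * π * Int.fract (f_c * (τ₀ s - τ j s)) / (2 * π * f_c)) t|
          = 0 := by
  have key i := hasDerivAt_effectiveDelay hf.ne' hτ₀.hasDerivAt (hτ i).hasDerivAt (hnint i)
  refine ⟨fun i => ⟨(key i).differentiableAt, (key i).deriv⟩, fun i j => ?_⟩
  simp [(key i).deriv, (key j).deriv]

/-- with the Pareto optimal phase shifts
`φ i (s) = 2π · fract(f_c (τ₀ s − τ i s))`, at every time `t` where all
`f_c (τ₀ t − τ i t)` are non-integer, each effective delay is differentiable
with derivative `(τ₀)'(t)`, and both Doppler spreads vanish. -/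
theorem pareto_phase_shifts_zero_doppler
    {ι : Type*} [Fintype ι] [Nonempty ι]
    (f_c : ℝ) (hf : 0 < f_c)
    (τ₀ : ℝ → ℝ) (τ : ι → ℝ → ℝ) (t : ℝ)
    (hτ₀ : DifferentiableAt ℝ τ₀ t) (hτ : ∀ i, DifferentiableAt ℝ (τ i) t)
    (hnint : ∀ i, ¬ ∃ k : ℤ, f_c * (τ₀ t - τ i t) = (k : ℝ)) :
    (∀ i,
      DifferentiableAt ℝ
        (fun s => τ i s + 2 * π * Int.fract (f_c * (τ₀ s - τ i s)) / (2 * π * f_c)) t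
      ∧ deriv
          (fun s => τ i s + 2 * π * Int.fract (f_c * (τ₀ s - τ i s)) / (2 * π * f_c)) t
        = deriv τ₀ t)
    ∧ ∀ i j,
        f_c * |deriv
            (fun s => τ i s + 2 * π * Int.fract (f_c * (τ₀ s - τ i s)) / (2 * π * f_c)) t
          - deriv τ₀ t| = 0
        ∧ f_c * |deriv
            (fun s => τ i s + 2 * π * Int.fract (f_c * (τ₀ s - τ i s)) / (2 * π * f_c)) t
          - deriv
            (fun s => τ j s + 2 * π * Int.fract (f_c * (τ₀ s - τ j s)) / (2 * π * f_c)) t|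
          = 0 :=
  pareto_phase_shifts_zero_doppler_general f_c hf τ₀ τ t hτ₀ hτ hnint
end
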